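/- arXiv:1808.02644 — 3 statements merged into one kernel-verified Lean document; each statement's English description precedes it below -/
import Mathlib

section
/- Let F be a smooth positively 1-homogeneous function on ℝ² \ {0} with E = F²/2 and Hessian g_{ij} = ∂²E/∂y^i∂y^j positive definite. Define the vector field V = (∂F/∂y¹) ∂/∂y² − (∂F/∂y²) ∂/∂y¹. Then g(V,V) = det(g_{ij}) at every nonzero point; in particular g(V,V) > 0 and V is nowhere zero on ℝ² \ {0}. -/
/-- The Riemann–Finsler metric `g` (Hessian of `E = F²/2`) evaluated at
coordinate directions. -/
noncomputable def hess (F : (Fin 2 → ℝ) → ℝ) (y : Fin 2 → ℝ) (i j : Fin 2) : ℝ :=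
  fderiv ℝ (fderiv ℝ (fun z => F z ^ 2 / 2)) y (Pi.single i 1) (Pi.single j 1)

/-- The rotated gradient vector field `V = (∂F/∂y¹)∂/∂y² − (∂F/∂y²)∂/∂y¹`,
i.e. `V¹ = −∂F/∂y²`, `V² = ∂F/∂y¹`. -/
noncomputable def Vfield (F : (Fin 2 → ℝ) → ℝ) (y : Fin 2 → ℝ) : Fin 2 → ℝ :=
  ![-(fderiv ℝ F y (Pi.single 1 1)), fderiv ℝ F y (Pi.single 0 1)]

/-- Euler's relation for positively 1-homogeneous functions. -/
private lemma euler_aux {G : (Fin 2 → ℝ) → ℝ} {y : Fin 2 → ℝ}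
    (hG : DifferentiableAt ℝ G y)
    (hh : ∀ t : ℝ, 0 < t → G (t • y) = t * G y) :
    fderiv ℝ G y y = G y := by
  have hs : HasDerivAt (fun t : ℝ => t • y) y 1 := by
    simpa using (hasDerivAt_id (1 : ℝ)).smul_const y
  have hG' : HasFDerivAt G (fderiv ℝ G y) ((1 : ℝ) • y) := by
    rw [one_smul]; exact hG.hasFDerivAt
  have h1 : HasDerivAt (fun t : ℝ => G (t • y)) (fderiv ℝ G y y) 1 := by
    exact hG'.comp_hasDerivAt (1 : ℝ) hs
  have h2 : HasDerivAt (fun t : ℝ => t * G y) (G y) 1 := by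
    simpa using (hasDerivAt_id (1 : ℝ)).mul_const (G y)
  have h3 : HasDerivAt (fun t : ℝ => G (t • y)) (G y) 1 := by
    refine h2.congr_of_eventuallyEq ?_
    filter_upwards [Ioi_mem_nhds (zero_lt_one)] with t ht
    exact hh t ht
  exact h1.unique h3

/-- For a Finsler surface, `g(V,V) = det g_{ij}` at every nonzero point; in
particular `g(V,V) > 0` and `V` is nowhere zero on `ℝ² \ {0}`. -/
theorem stmt3 (F : (Fin 2 → ℝ) → ℝ)
    (hF : ContDiffOn ℝ (⊤ : ℕ∞) F {0}ᶜ)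
    (hFpos : ∀ y : Fin 2 → ℝ, y ≠ 0 → 0 < F y)
    (hhom : ∀ t : ℝ, 0 < t → ∀ y, F (t • y) = t * F y)
    (hpos : ∀ y : Fin 2 → ℝ, y ≠ 0 → ∀ v : Fin 2 → ℝ, v ≠ 0 →
      0 < fderiv ℝ (fderiv ℝ (fun z => F z ^ 2 / 2)) y v v)
    (y : Fin 2 → ℝ) (hy : y ≠ 0) :
    (∑ i, ∑ j, hess F y i j * Vfield F y i * Vfield F y j)
      = (Matrix.of (hess F y)).det ∧
    0 < (Matrix.of (hess F y)).det ∧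
    Vfield F y ≠ 0 := by
  have hmem : ({0}ᶜ : Set (Fin 2 → ℝ)) ∈ nhds y :=
    isOpen_compl_singleton.mem_nhds hy
  -- massage the goal into explicit components
  rw [Matrix.det_fin_two]
  simp only [hess, Vfield, Matrix.of_apply, Fin.sum_univ_two, Matrix.cons_val_zero,
    Matrix.cons_val_one, Matrix.head_cons]
  set E : (Fin 2 → ℝ) → ℝ := fun z => F z ^ 2 / 2 with hEdef
  have hEc : ContDiffOn ℝ (⊤ : ℕ∞) E ({0}ᶜ) := (hF.pow 2).div_const 2
  have hFdiff : ∀ z : Fin 2 → ℝ, z ≠ 0 → DifferentiableAt ℝ F z := fun z hz =>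
    (hF.contDiffAt (isOpen_compl_singleton.mem_nhds hz)).differentiableAt (by simp)
  have hEdiff : ∀ z : Fin 2 → ℝ, z ≠ 0 → DifferentiableAt ℝ E z := fun z hz =>
    (hEc.contDiffAt (isOpen_compl_singleton.mem_nhds hz)).differentiableAt (by simp)
  -- derivative of E in terms of derivative of F
  have hDEz : ∀ z : Fin 2 → ℝ, z ≠ 0 → HasFDerivAt E (F z • fderiv ℝ F z) z := by
    intro z hz
    have h1 := (hFdiff z hz).hasFDerivAt
    have h2 := (h1.mul h1).const_smul ((2 : ℝ)⁻¹)
    have heq : E = fun w => (2 : ℝ)⁻¹ • (F w * F w) := by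
      funext w; simp [hEdef, smul_eq_mul]; ring
    rw [heq]
    refine h2.congr_fderiv ?_
    ext w
    simp only [ContinuousLinearMap.smul_apply, ContinuousLinearMap.add_apply, smul_eq_mul]
    ring
  have hDEcoord : ∀ w, fderiv ℝ E y w = F y * fderiv ℝ F y w := by
    intro w
    rw [(hDEz y hy).fderiv]
    simp
  -- homogeneity of the first derivative of E
  have hDEhom : ∀ t : ℝ, 0 < t → ∀ w, fderiv ℝ E (t • y) w = t * fderiv ℝ E y w := by
    intro t ht w
    have hty : t • y ≠ 0 := smul_ne_zero (ne_of_gt ht) hy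
    have hsm : HasFDerivAt (fun z : Fin 2 → ℝ => t • z)
        (t • ContinuousLinearMap.id ℝ (Fin 2 → ℝ)) y := (hasFDerivAt_id y).const_smul t
    have hcomp : HasFDerivAt (fun z : Fin 2 → ℝ => E (t • z))
        ((fderiv ℝ E (t • y)).comp (t • ContinuousLinearMap.id ℝ (Fin 2 → ℝ))) y := by
      exact ((hEdiff _ hty).hasFDerivAt.comp y hsm)
    have hcongr : (fun z : Fin 2 → ℝ => t ^ 2 * E z) =ᶠ[nhds y]
        (fun z : Fin 2 → ℝ => E (t • z)) := by
      filter_upwards [hmem] with z hz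
      have h := hhom t ht z
      simp only [hEdef, h]
      ring
    have hR : HasFDerivAt (fun z : Fin 2 → ℝ => t ^ 2 * E z)
        ((fderiv ℝ E (t • y)).comp (t • ContinuousLinearMap.id ℝ (Fin 2 → ℝ))) y :=
      hcomp.congr_of_eventuallyEq hcongr
    have hR2 : HasFDerivAt (fun z : Fin 2 → ℝ => t ^ 2 * E z)
        ((t ^ 2 : ℝ) • fderiv ℝ E y) y := (hEdiff y hy).hasFDerivAt.const_mul (t ^ 2)
    have hEqL := hR.unique hR2
    have happ := congrArg (fun L : (Fin 2 → ℝ) →L[ℝ] ℝ => L w) hEqL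
    simp only [ContinuousLinearMap.comp_apply, ContinuousLinearMap.smul_apply,
      ContinuousLinearMap.id_apply, map_smul, smul_eq_mul] at happ
    -- happ : t * fderiv ℝ E (t • y) w = t ^ 2 * fderiv ℝ E y w
    have := mul_left_cancel₀ (ne_of_gt ht) (by linear_combination happ :
      t * fderiv ℝ E (t • y) w = t * (t * fderiv ℝ E y w))
    exact this
  -- second derivative of E
  have hfd1 : ContDiffAt ℝ (⊤ : ℕ∞) (fderiv ℝ E) y := (hEc.contDiffAt hmem).fderiv_right (by simp)
  set B := fderiv ℝ (fderiv ℝ E) y with hBdef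
  have hB : HasFDerivAt (fderiv ℝ E) B y := (hfd1.differentiableAt (by simp)).hasFDerivAt
  -- Euler relation for the second derivative
  have key1 : ∀ w, B y w = fderiv ℝ E y w := by
    intro w
    have hGdiff : DifferentiableAt ℝ (fun z => fderiv ℝ E z w) y := by
      exact ((ContinuousLinearMap.apply ℝ ℝ w).differentiableAt).comp y
        (hfd1.differentiableAt (by simp))
    have hGfd : fderiv ℝ (fun z => fderiv ℝ E z w) y y = B y w := by
      have hc := fderiv_comp (𝕜 := ℝ) y
        ((ContinuousLinearMap.apply ℝ ℝ w).differentiableAt)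
        (hfd1.differentiableAt (by simp))
      have : fderiv ℝ (fun z => fderiv ℝ E z w) y =
          (ContinuousLinearMap.apply ℝ ℝ w).comp B := by
        rw [← hBdef] at hc
        simp only [ContinuousLinearMap.fderiv] at hc; exact hc
      rw [this]
      simp [ContinuousLinearMap.apply]
    have hGhom : ∀ t : ℝ, 0 < t → fderiv ℝ E (t • y) w = t * fderiv ℝ E y w :=
      fun t ht => hDEhom t ht w
    have := euler_aux hGdiff hGhom
    rw [hGfd] at this
    exact this
  -- Euler relation for F
  have eulerF : fderiv ℝ F y y = F y :=
    euler_aux (hFdiff y hy) (fun t ht => hhom t ht y)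
  -- symmetry of the second derivative
  have hsymm : ∀ v w : Fin 2 → ℝ, B v w = B w v := by
    intro v w
    exact second_derivative_symmetric_of_eventually
      (by filter_upwards [hmem] with z hz; exact (hEdiff z hz).hasFDerivAt) hB v w
  set e0 : Fin 2 → ℝ := Pi.single 0 1 with he0
  set e1 : Fin 2 → ℝ := Pi.single 1 1 with he1
  have hy01 : y = y 0 • e0 + y 1 • e1 := by
    ext i; fin_cases i <;> simp [he0, he1]
  have hBy : ∀ w, B y w = y 0 * B e0 w + y 1 * B e1 w := by
    intro w
    conv_lhs => rw [hy01]
    simp [smul_eq_mul]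
  have hBw : ∀ v, B v y = y 0 * B v e0 + y 1 * B v e1 := by
    intro v
    conv_lhs => rw [hy01]
    simp [smul_eq_mul]
  set p := fderiv ℝ F y e0 with hp
  set q := fderiv ℝ F y e1 with hq
  have hBvv : ∀ v : Fin 2 → ℝ, B v v =
      v 0 * (v 0 * B e0 e0 + v 1 * B e0 e1) + v 1 * (v 0 * B e1 e0 + v 1 * B e1 e1) := by
    intro v
    have hv01 : v = v 0 • e0 + v 1 • e1 := by
      ext i; fin_cases i <;> simp [he0, he1]
    conv_lhs => rw [hv01]
    simp [smul_eq_mul]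
  set a := B e0 e0 with ha'
  set b := B e0 e1 with hb'
  set c := B e1 e0 with hc'
  set d := B e1 e1 with hd'
  have hbc : b = c := hsymm e0 e1
  have eq1 : y 0 * a + y 1 * c = F y * p := by
    have k := key1 e0
    rw [hBy e0, hDEcoord e0] at k
    exact k
  have eq2 : y 0 * b + y 1 * d = F y * q := by
    have k := key1 e1
    rw [hBy e1, hDEcoord e1] at k
    exact k
  have eq3 : y 0 * (y 0 * a + y 1 * b) + y 1 * (y 0 * c + y 1 * d) = F y * F y := by
    have k := key1 y
    rw [hBy y, hBw e0, hBw e1, hDEcoord y, eulerF] at k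
    exact k
  have hF0 : F y ≠ 0 := ne_of_gt (hFpos y hy)
  -- positivity
  have he0ne : e0 ≠ 0 := by
    intro h
    have := congrFun h 0
    simp [he0] at this
  have hapos : 0 < a := hpos y hy e0 he0ne
  have hposv : ∀ v : Fin 2 → ℝ, v ≠ 0 →
      0 < v 0 * (v 0 * a + v 1 * b) + v 1 * (v 0 * c + v 1 * d) := by
    intro v hv
    have hv01 : v = v 0 • e0 + v 1 • e1 := by
      ext i; fin_cases i <;> simp [he0, he1]
    have hq0 : 0 < B v v := hpos y hy v hv
    rw [hBvv v] at hq0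
    exact hq0
  clear_value a b c d p q e0 e1 B E
  have hdet : 0 < a * d - b * b := by
    have hvne : (![b, -a] : Fin 2 → ℝ) ≠ 0 := by
      intro h
      have := congrFun h 1
      simp at this
      exact (ne_of_gt hapos) this
    have hq0 := hposv ![b, -a] hvne
    simp only [Matrix.cons_val_zero, Matrix.cons_val_one, Matrix.head_cons] at hq0
    rw [← hbc] at hq0
    nlinarith [hq0, hapos]
  -- the main identity
  have main : a * q ^ 2 - 2 * b * p * q + d * p ^ 2 = a * d - b * b := by
    have h1 : F y * p = y 0 * a + y 1 * b := by rw [← eq1, hbc]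
    have h2 : F y * q = y 0 * b + y 1 * d := by rw [← eq2]
    have h3 : F y * F y = y 0 * (y 0 * a + y 1 * b) + y 1 * (y 0 * b + y 1 * d) := by
      rw [← eq3, hbc]
    have hmul : (F y) ^ 2 * (a * q ^ 2 - 2 * b * p * q + d * p ^ 2)
        = (F y) ^ 2 * (a * d - b * b) := by
      linear_combination (d * (F y * p + (y 0 * a + y 1 * b)) - 2 * b * (F y * q)) * h1 +
        (a * (F y * q + (y 0 * b + y 1 * d)) - 2 * b * (y 0 * a + y 1 * b)) * h2 -
        (a * d - b * b) * h3
    exact mul_left_cancel₀ (pow_ne_zero 2 hF0) hmul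
  refine ⟨?_, ?_, ?_⟩
  · linear_combination main + (p * q - b) * hbc
  · rw [← hbc]; exact hdet
  · intro h0
    have hp0 : p = 0 := by simpa using congrFun h0 1
    have hq0 : q = 0 := by simpa using congrFun h0 0
    rw [hp0, hq0] at main
    have hz : a * d - b * b = 0 := by linear_combination -main
    exact (ne_of_gt hdet) hz
end

section
/- Let ρ be a smooth 1-form on ℝ² with div ρ^♯ = 0, so that there exists a potential f with ρ₂ = ∂f/∂u¹ and ρ₁ = −∂f/∂u². Then along any curve c, the ∇-parallel vector fields are exactly X(t) = r₀(cos(φ(t)+φ₀), −sin(φ(t)+φ₀)) with φ = f∘c and constants r₀ ≥ 0, φ₀ ∈ ℝ. Consequently, for any closed curve c (c(0) = c(1)) the ∇-holonomy is trivial: X(0) = X(1). -/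
/-!
With `φ = f ∘ c`, the chain rule and `ρ = (-∂₂f, ∂₁f)` give `φ' = c₁'ρ₂ - c₂'ρ₁`, so the
parallel transport equations say that `(X¹, X²)` rotates with angular velocity `-φ'`.
Rotating it back by the angle `φ` yields a vector with zero derivative, i.e. a constant
`(a, b)`, and the polar form of `(a, -b)` supplies `r₀` and `φ₀`. On a closed curve
`φ(0) = f(c(0)) = f(c(1)) = φ(1)`, so the rotation is the same at both ends.
-/

open Real

lemma hasDerivAt_comp_planeCurve {f : (Fin 2 → ℝ) → ℝ} {c1 c2 : ℝ → ℝ} {t : ℝ}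
    (hf : DifferentiableAt ℝ f ![c1 t, c2 t]) (hc1 : DifferentiableAt ℝ c1 t)
    (hc2 : DifferentiableAt ℝ c2 t) :
    HasDerivAt (fun s => f ![c1 s, c2 s])
      (deriv c1 t * fderiv ℝ f ![c1 t, c2 t] (Pi.single 0 1) +
        deriv c2 t * fderiv ℝ f ![c1 t, c2 t] (Pi.single 1 1)) t := by
  have hc : HasDerivAt (fun s => (![c1 s, c2 s] : Fin 2 → ℝ)) ![deriv c1 t, deriv c2 t] t := by
    rw [hasDerivAt_pi]
    intro i
    fin_cases i
    · simpa using hc1.hasDerivAt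
    · simpa using hc2.hasDerivAt
  have hv : (![deriv c1 t, deriv c2 t] : Fin 2 → ℝ) =
      deriv c1 t • (Pi.single 0 1 : Fin 2 → ℝ) + deriv c2 t • (Pi.single 1 1 : Fin 2 → ℝ) := by
    funext i
    fin_cases i <;> simp
  refine (hf.hasFDerivAt.comp_hasDerivAt t hc).congr_deriv ?_
  rw [hv, map_add, map_smul, map_smul, smul_eq_mul, smul_eq_mul]

section Rotation

variable {φ ψ X1 X2 : ℝ → ℝ}

lemma exists_coeffs_of_rotating (hφ : ∀ t, HasDerivAt φ (ψ t) t)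
    (hX1 : ∀ t, HasDerivAt X1 (X2 t * ψ t) t) (hX2 : ∀ t, HasDerivAt X2 (X1 t * -ψ t) t) :
    ∃ a b : ℝ, ∀ t, X1 t = a * cos (φ t) + b * sin (φ t) ∧
      X2 t = -a * sin (φ t) + b * cos (φ t) := by
  set A : ℝ → ℝ := fun t => X1 t * cos (φ t) - X2 t * sin (φ t)
  set B : ℝ → ℝ := fun t => X1 t * sin (φ t) + X2 t * cos (φ t)
  have hA : ∀ t, HasDerivAt A 0 t := fun t =>
    (((hX1 t).mul (hφ t).cos).sub ((hX2 t).mul (hφ t).sin)).congr_deriv (by ring)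
  have hB : ∀ t, HasDerivAt B 0 t := fun t =>
    (((hX1 t).mul (hφ t).sin).add ((hX2 t).mul (hφ t).cos)).congr_deriv (by ring)
  have hA_const : ∀ t, A t = A 0 := fun t =>
    is_const_of_deriv_eq_zero (fun s => (hA s).differentiableAt) (fun s => (hA s).deriv) t 0
  have hB_const : ∀ t, B t = B 0 := fun t =>
    is_const_of_deriv_eq_zero (fun s => (hB s).differentiableAt) (fun s => (hB s).deriv) t 0
  refine ⟨A 0, B 0, fun t => ⟨?_, ?_⟩⟩ <;> rw [← hA_const t, ← hB_const t]
  · linear_combination -X1 t * sin_sq_add_cos_sq (φ t)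
  · linear_combination -X2 t * sin_sq_add_cos_sq (φ t)

lemma exists_polar_rotation (a b : ℝ) : ∃ r, 0 ≤ r ∧ ∃ θ, ∀ x,
    a * cos x + b * sin x = r * cos (x + θ) ∧ -a * sin x + b * cos x = -(r * sin (x + θ)) := by
  set z : ℂ := ⟨a, -b⟩
  have hre : ‖z‖ * cos z.arg = a := Complex.norm_mul_cos_arg z
  have him : ‖z‖ * sin z.arg = -b := Complex.norm_mul_sin_arg z
  refine ⟨‖z‖, norm_nonneg z, z.arg, fun x => ⟨?_, ?_⟩⟩
  · rw [cos_add]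
    linear_combination -cos x * hre + sin x * him
  · rw [sin_add]
    linear_combination sin x * hre + cos x * him

lemma rotating_iff_exists_polar (hφ : ∀ t, HasDerivAt φ (ψ t) t) (hX1 : Differentiable ℝ X1)
    (hX2 : Differentiable ℝ X2) :
    (∀ t, deriv X1 t = X2 t * ψ t ∧ deriv X2 t = X1 t * -ψ t) ↔
      ∃ r0, 0 ≤ r0 ∧ ∃ φ0, ∀ t,
        X1 t = r0 * cos (φ t + φ0) ∧ X2 t = -(r0 * sin (φ t + φ0)) := by
  constructor
  · intro h
    obtain ⟨a, b, hab⟩ := exists_coeffs_of_rotating hφ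
      (fun t => (h t).1 ▸ (hX1 t).hasDerivAt) (fun t => (h t).2 ▸ (hX2 t).hasDerivAt)
    obtain ⟨r0, hr0, φ0, hpolar⟩ := exists_polar_rotation a b
    exact ⟨r0, hr0, φ0, fun t => ⟨(hab t).1.trans (hpolar _).1, (hab t).2.trans (hpolar _).2⟩⟩
  · rintro ⟨r0, -, φ0, hX⟩ t
    obtain rfl : X1 = fun t => r0 * cos (φ t + φ0) := funext fun t => (hX t).1
    obtain rfl : X2 = fun t => -(r0 * sin (φ t + φ0)) := funext fun t => (hX t).2
    have hθ := (hφ t).add_const φ0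
    constructor
    · rw [(hθ.cos.const_mul r0).deriv]; ring
    · have hd : HasDerivAt (fun t => -(r0 * sin (φ t + φ0))) _ t := (hθ.sin.const_mul r0).neg
      rw [hd.deriv]; ring

end Rotation

/-- Let `ρ` be a 1-form on the Euclidean plane with `div ρ^♯ = 0`, so that there
is a potential `f` with `ρ₂ = ∂f/∂u¹` and `ρ₁ = −∂f/∂u²`. Then, along any
curve `c`, the parallel vector fields of the semi-symmetric metric connection
`∇` determined by `ρ` are exactly the rotating fields
`X(t) = r₀(cos(φ(t)+φ₀), −sin(φ(t)+φ₀))` with `φ = f∘c`; consequently the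
`∇`-holonomy along any closed curve is trivial. -/
theorem stmt13 (ρ1 ρ2 : (Fin 2 → ℝ) → ℝ) (f : (Fin 2 → ℝ) → ℝ)
    (hf : ContDiff ℝ 1 f)
    (hρ2 : ∀ u, ρ2 u = fderiv ℝ f u (Pi.single 0 1))
    (hρ1 : ∀ u, ρ1 u = -fderiv ℝ f u (Pi.single 1 1))
    (c1 c2 X1 X2 : ℝ → ℝ)
    (hc1 : ContDiff ℝ 1 c1) (hc2 : ContDiff ℝ 1 c2)
    (hX1 : Differentiable ℝ X1) (hX2 : Differentiable ℝ X2) :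
    ((∀ t, deriv X1 t = X2 t * (deriv c1 t * ρ2 ![c1 t, c2 t] - deriv c2 t * ρ1 ![c1 t, c2 t]) ∧
        deriv X2 t = X1 t * (deriv c2 t * ρ1 ![c1 t, c2 t] - deriv c1 t * ρ2 ![c1 t, c2 t]))
      ↔
      ∃ r0 : ℝ, 0 ≤ r0 ∧ ∃ φ0 : ℝ, ∀ t,
        X1 t = r0 * Real.cos (f ![c1 t, c2 t] + φ0) ∧
        X2 t = -(r0 * Real.sin (f ![c1 t, c2 t] + φ0))) ∧
    ((c1 0 = c1 1 ∧ c2 0 = c2 1) →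
      (∀ t, deriv X1 t = X2 t * (deriv c1 t * ρ2 ![c1 t, c2 t] - deriv c2 t * ρ1 ![c1 t, c2 t]) ∧
        deriv X2 t = X1 t * (deriv c2 t * ρ1 ![c1 t, c2 t] - deriv c1 t * ρ2 ![c1 t, c2 t])) →
      X1 0 = X1 1 ∧ X2 0 = X2 1) := by
  have hφ : ∀ t, HasDerivAt (fun s => f ![c1 s, c2 s])
      (deriv c1 t * ρ2 ![c1 t, c2 t] - deriv c2 t * ρ1 ![c1 t, c2 t]) t := fun t =>
    (hasDerivAt_comp_planeCurve (hf.differentiable one_ne_zero _)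
      (hc1.differentiable one_ne_zero t) (hc2.differentiable one_ne_zero t)).congr_deriv
      (by rw [hρ1, hρ2]; ring)
  have hparallel := rotating_iff_exists_polar hφ hX1 hX2
  simp only [neg_sub] at hparallel
  refine ⟨hparallel, fun ⟨hc1_closed, hc2_closed⟩ hX => ?_⟩
  obtain ⟨r0, -, φ0, hrot⟩ := hparallel.mp hX
  rw [(hrot 0).1, (hrot 1).1, (hrot 0).2, (hrot 1).2, hc1_closed, hc2_closed]
  exact ⟨rfl, rfl⟩
end

section
/- Let λ be a smooth function on an interval and suppose V(λ)·d(Vλ) = V(Vλ)·dλ as 1-forms on a manifold (Wagner's equation), at a point where V(λ) ≠ 0. Then locally d((Vλ)dλ) = 0, hence there is a local function μ with (Vλ)dλ = dμ, and μ is constant on the level sets of λ; consequently Vλ is locally a function of λ. -/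
open Filter Metric Set


/-- The derivative `Vλ` of a function `lam` along the vector field `V`. -/
noncomputable def Vderiv {n : ℕ} (V : (Fin n → ℝ) → Fin n → ℝ)
    (lam : (Fin n → ℝ) → ℝ) (x : Fin n → ℝ) : ℝ :=
  fderiv ℝ lam x (V x)

/-- Wagner's key step: if `V(λ)·d(Vλ) = V(Vλ)·dλ` holds near a point `v` where
`V(λ)(v) ≠ 0`, then (i) `d(Vλ) ∧ dλ = 0` near `v`, (ii) locally
`(Vλ)dλ = dμ` for some function `μ`, and (iii) `Vλ` is locally a function of
`λ`. -/
theorem stmt18 {n : ℕ} (V : (Fin n → ℝ) → Fin n → ℝ) (lam : (Fin n → ℝ) → ℝ)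
    (hV : ContDiff ℝ (⊤ : ℕ∞) V) (hlam : ContDiff ℝ (⊤ : ℕ∞) lam)
    (v : Fin n → ℝ) (hne : Vderiv V lam v ≠ 0)
    (hwag : ∀ᶠ x in nhds v,
      Vderiv V lam x • fderiv ℝ (Vderiv V lam) x
        = fderiv ℝ (Vderiv V lam) x (V x) • fderiv ℝ lam x) :
    (∀ᶠ x in nhds v, ∀ a b : Fin n → ℝ,
      fderiv ℝ (Vderiv V lam) x a * fderiv ℝ lam x b
        = fderiv ℝ (Vderiv V lam) x b * fderiv ℝ lam x a) ∧
    (∃ U ∈ nhds v, ∃ μ : (Fin n → ℝ) → ℝ, ∀ x ∈ U,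
      fderiv ℝ μ x = Vderiv V lam x • fderiv ℝ lam x) ∧
    (∃ U ∈ nhds v, ∃ g : ℝ → ℝ, ∀ x ∈ U, Vderiv V lam x = g (lam x)) := by
  have hlam1 : ContDiff ℝ 1 lam := hlam.of_le (by simp)
  have hdlam : ContDiff ℝ 1 (fderiv ℝ lam) := hlam.fderiv_right (WithTop.coe_le_coe.mpr le_top)
  have hVl : ContDiff ℝ 1 (Vderiv V lam) := hdlam.clm_apply (hV.of_le (by simp))
  set L : (Fin n → ℝ) →L[ℝ] ℝ := fderiv ℝ lam v with hLdef
  set e : Fin n → ℝ := (Vderiv V lam v)⁻¹ • V v with hedef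
  have hLe : L e = 1 := by
    rw [hedef, map_smul, smul_eq_mul]; exact inv_mul_cancel₀ hne
  set A : (Fin n → ℝ) → (Fin n → ℝ) := fun x => x + (lam x - L x) • e with hAdef
  have hAc : ContDiff ℝ 1 A :=
    contDiff_id.add ((hlam1.sub (L.contDiff)).smul contDiff_const)
  have hA' : HasFDerivAt A
      ((ContinuousLinearEquiv.refl ℝ (Fin n → ℝ) : (Fin n → ℝ) ≃L[ℝ] (Fin n → ℝ)) :
        (Fin n → ℝ) →L[ℝ] (Fin n → ℝ)) v := by
    have h1 : HasFDerivAt lam L v := (hlam1.differentiable one_ne_zero v).hasFDerivAt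
    have h2 : HasFDerivAt (fun x => (lam x - L x) • e)
        ((L - L).smulRight e) v := (h1.sub L.hasFDerivAt).smul_const e
    have h3 := (hasFDerivAt_id v).add h2
    refine h3.congr_fderiv ?_
    ext w; simp
  have hLA : ∀ x, L (A x) = lam x := by
    intro x; rw [hAdef]; simp only [map_add, map_smul, smul_eq_mul, hLe]; ring
  -- local inverse
  have hAcd : ContDiffAt ℝ 1 A v := hAc.contDiffAt
  have hstrict := hAcd.hasStrictFDerivAt' hA' one_ne_zero
  set B : (Fin n → ℝ) → (Fin n → ℝ) := hAcd.localInverse hA' one_ne_zero with hBdef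
  have hBcd : ContDiffAt ℝ 1 B (A v) := hAcd.to_localInverse hA' one_ne_zero
  have hleft : ∀ᶠ x in nhds v, B (A x) = x := hstrict.eventually_left_inverse
  have hright : ∀ᶠ y in nhds (A v), A (B y) = y := hstrict.eventually_right_inverse
  have hBy0 : B (A v) = v := hstrict.localInverse_apply_image
  obtain ⟨u, hu_nhds, hu⟩ := hBcd.contDiffOn le_rfl (by simp)
  have hBdiff : ∀ y ∈ interior u, DifferentiableAt ℝ B y := fun y hy =>
    ((hu.differentiableOn one_ne_zero).differentiableAt (mem_interior_iff_mem_nhds.mp hy))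
  -- good set near v
  have hne_ev : ∀ᶠ x in nhds v, Vderiv V lam x ≠ 0 :=
    hVl.continuous.continuousAt.eventually_ne hne
  have hWgood : ∀ᶠ x in nhds v, Vderiv V lam x ≠ 0 ∧
      Vderiv V lam x • fderiv ℝ (Vderiv V lam) x
        = fderiv ℝ (Vderiv V lam) x (V x) • fderiv ℝ lam x := hne_ev.and hwag
  have hBtend : Filter.Tendsto B (nhds (A v)) (nhds v) := by
    have := hBcd.continuousAt
    rwa [ContinuousAt, hBy0] at this
  have hcomb : ∀ᶠ y in nhds (A v), A (B y) = y ∧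
      (Vderiv V lam (B y) ≠ 0 ∧
        Vderiv V lam (B y) • fderiv ℝ (Vderiv V lam) (B y)
          = fderiv ℝ (Vderiv V lam) (B y) (V (B y)) • fderiv ℝ lam (B y)) ∧
      y ∈ interior u := by
    have h1 : ∀ᶠ y in nhds (A v), y ∈ interior u :=
      interior_mem_nhds.mpr hu_nhds
    exact hright.and ((hBtend.eventually hWgood).and h1)
  obtain ⟨r, hr0, hball⟩ := Metric.eventually_nhds_iff_ball.mp hcomb
  -- fiber lemma: Vderiv∘B is constant on fibers of L within the ball
  have key : ∀ y1 ∈ Metric.ball (A v) r, ∀ y2 ∈ Metric.ball (A v) r, L y1 = L y2 →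
      Vderiv V lam (B y1) = Vderiv V lam (B y2) := by
    intro y1 h1 y2 h2 hLeq
    set c : ℝ → (Fin n → ℝ) := fun t => y1 + t • (y2 - y1) with hcdef
    have hmem : ∀ t ∈ Set.Icc (0:ℝ) 1, c t ∈ Metric.ball (A v) r := fun t ht =>
      (convex_ball (A v) r).add_smul_sub_mem h1 h2 ht
    have hccont : Continuous c := by
      exact continuous_const.add (continuous_id.smul continuous_const)
    have hderiv : ∀ t ∈ Set.Icc (0:ℝ) 1,
        HasDerivAt (fun s => Vderiv V lam (B (c s))) 0 t := by
      intro t ht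
      have hct : c t ∈ Metric.ball (A v) r := hmem t ht
      obtain ⟨hABct, ⟨hne', hwag'⟩, hint⟩ := hball _ hct
      have hc' : HasDerivAt c (y2 - y1) t := by
        have : HasDerivAt (fun s : ℝ => s • (y2 - y1)) ((1:ℝ) • (y2 - y1)) t :=
          (hasDerivAt_id t).smul_const (y2 - y1)
        rw [one_smul] at this; exact this.const_add y1
      have hBc : HasDerivAt (fun s => B (c s)) (fderiv ℝ B (c t) (y2 - y1)) t :=
        ((hBdiff _ hint).hasFDerivAt.comp_hasDerivAt t hc' : HasDerivAt (B ∘ c) _ t)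
      set w := fderiv ℝ B (c t) (y2 - y1) with hwdef
      set x' := B (c t) with hx'def
      -- lam ∘ B ∘ c equals L ∘ c near t
      have heq : (fun s => lam (B (c s))) =ᶠ[nhds t] (fun s => L (c s)) := by
        have hev : ∀ᶠ s in nhds t, c s ∈ Metric.ball (A v) r :=
          hccont.continuousAt.preimage_mem_nhds (Metric.isOpen_ball.mem_nhds hct)
        filter_upwards [hev] with s hs
        have hABs := (hball _ hs).1
        calc lam (B (c s)) = L (A (B (c s))) := (hLA _).symm
        _ = L (c s) := by rw [hABs]
      have h1d : HasDerivAt (fun s => lam (B (c s))) (fderiv ℝ lam x' w) t :=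
        ((hlam1.differentiable one_ne_zero x').hasFDerivAt.comp_hasDerivAt t hBc :
          HasDerivAt (lam ∘ fun s => B (c s)) _ t)
      have h2d : HasDerivAt (fun s => L (c s)) (L (y2 - y1)) t :=
        (L.hasFDerivAt.comp_hasDerivAt t hc' : HasDerivAt (L ∘ c) _ t)
      have h1d' : HasDerivAt (fun s => L (c s)) (fderiv ℝ lam x' w) t :=
        h1d.congr_of_eventuallyEq heq.symm
      have hlw : fderiv ℝ lam x' w = L (y2 - y1) := h1d'.unique h2d
      have hLzero : L (y2 - y1) = 0 := by rw [map_sub, hLeq, sub_self]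
      have happ := congrArg (fun T : (Fin n → ℝ) →L[ℝ] ℝ => T w) hwag'
      simp only [ContinuousLinearMap.smul_apply, smul_eq_mul] at happ
      have hdvlw : fderiv ℝ (Vderiv V lam) x' w = 0 := by
        have : Vderiv V lam x' * fderiv ℝ (Vderiv V lam) x' w = 0 := by
          rw [happ, hlw, hLzero, mul_zero]
        exact (mul_eq_zero.mp this).resolve_left hne'
      have h3 : HasDerivAt (fun s => Vderiv V lam (B (c s)))
          (fderiv ℝ (Vderiv V lam) x' w) t :=
        ((hVl.differentiable one_ne_zero x').hasFDerivAt.comp_hasDerivAt t hBc :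
          HasDerivAt (Vderiv V lam ∘ fun s => B (c s)) _ t)
      rwa [hdvlw] at h3
    have hcont : ContinuousOn (fun t => Vderiv V lam (B (c t))) (Set.Icc 0 1) :=
      fun t ht => ((hderiv t ht).continuousAt).continuousWithinAt
    have hconst := constant_of_has_deriv_right_zero hcont
      (fun t ht => (hderiv t (Set.mem_Icc_of_Ico ht)).hasDerivWithinAt)
      1 (Set.right_mem_Icc.mpr zero_le_one)
    have hc1 : c 1 = y2 := by rw [hcdef]; simp
    have hc0 : c 0 = y1 := by rw [hcdef]; simp
    rw [hc1, hc0] at hconst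
    exact hconst.symm
  -- reference curve and g
  set q : ℝ → (Fin n → ℝ) := fun s => A v + (s - lam v) • e with hqdef
  have hLy0 : L (A v) = lam v := hLA v
  have hLq : ∀ s, L (q s) = s := by
    intro s
    rw [hqdef]
    simp only [map_add, map_smul, smul_eq_mul, hLe, hLy0]
    ring
  set g : ℝ → ℝ := fun s => Vderiv V lam (B (q s)) with hgdef
  have hr'ex : ∀ a : ℝ, 0 ≤ a → ∃ r' : ℝ, 0 < r' ∧ r' ≤ r ∧ a * r' < r := by
    intro a ha
    refine ⟨r / (1 + a), div_pos hr0 (by linarith), div_le_self hr0.le (by linarith), ?_⟩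
    rw [← mul_div_assoc, div_lt_iff₀ (by linarith)]
    nlinarith
  obtain ⟨r', hr'0, hr'r, hr'K⟩ :=
    hr'ex (‖L‖ * ‖e‖) (mul_nonneg (norm_nonneg _) (norm_nonneg _))
  have hqnorm : ∀ s : ℝ, ‖q s - A v‖ = |s - lam v| * ‖e‖ := by
    intro s
    rw [hqdef]
    simp [norm_smul, Real.norm_eq_abs]
  have claimC : ∀ y ∈ Metric.ball (A v) r', Vderiv V lam (B y) = g (L y) := by
    intro y hy
    have hy1 : y ∈ Metric.ball (A v) r := Metric.ball_subset_ball hr'r hy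
    have hy2 : q (L y) ∈ Metric.ball (A v) r := by
      rw [Metric.mem_ball, dist_eq_norm, hqnorm]
      have hb1 : |L y - lam v| ≤ ‖L‖ * ‖y - A v‖ := by
        have := L.le_opNorm (y - A v)
        rw [map_sub, hLy0] at this
        simpa [Real.norm_eq_abs] using this
      have hb2 : ‖y - A v‖ < r' := by
        rw [Metric.mem_ball, dist_eq_norm] at hy; exact hy
      have hchain : |L y - lam v| * ‖e‖ ≤ ‖L‖ * ‖e‖ * r' := by
        calc |L y - lam v| * ‖e‖ ≤ ‖L‖ * ‖y - A v‖ * ‖e‖ :=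
              mul_le_mul_of_nonneg_right hb1 (norm_nonneg _)
        _ ≤ ‖L‖ * r' * ‖e‖ := by
              have := mul_le_mul_of_nonneg_left hb2.le (norm_nonneg L)
              exact mul_le_mul_of_nonneg_right this (norm_nonneg _)
        _ = ‖L‖ * ‖e‖ * r' := by ring
      linarith
    exact key y hy1 (q (L y)) hy2 (by rw [hLq])
  -- part (i)
  have part1 : ∀ᶠ x in nhds v, ∀ a b : Fin n → ℝ,
      fderiv ℝ (Vderiv V lam) x a * fderiv ℝ lam x b
        = fderiv ℝ (Vderiv V lam) x b * fderiv ℝ lam x a := by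
    filter_upwards [hWgood] with x hx a b
    obtain ⟨hx0, hxw⟩ := hx
    have ha := congrArg (fun T : (Fin n → ℝ) →L[ℝ] ℝ => T a) hxw
    have hb := congrArg (fun T : (Fin n → ℝ) →L[ℝ] ℝ => T b) hxw
    simp only [ContinuousLinearMap.smul_apply, smul_eq_mul] at ha hb
    apply mul_left_cancel₀ hx0
    calc Vderiv V lam x * (fderiv ℝ (Vderiv V lam) x a * fderiv ℝ lam x b)
        = (Vderiv V lam x * fderiv ℝ (Vderiv V lam) x a) * fderiv ℝ lam x b := by ring
      _ = (fderiv ℝ (Vderiv V lam) x (V x) * fderiv ℝ lam x a) * fderiv ℝ lam x b := by rw [ha]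
      _ = (fderiv ℝ (Vderiv V lam) x (V x) * fderiv ℝ lam x b) * fderiv ℝ lam x a := by ring
      _ = (Vderiv V lam x * fderiv ℝ (Vderiv V lam) x b) * fderiv ℝ lam x a := by rw [hb]
      _ = Vderiv V lam x * (fderiv ℝ (Vderiv V lam) x b * fderiv ℝ lam x a) := by ring
  -- part (iii)
  have hApre : A ⁻¹' (Metric.ball (A v) r') ∈ nhds v :=
    hAc.continuous.continuousAt.preimage_mem_nhds (Metric.ball_mem_nhds _ hr'0)
  have hleft_mem : {x | B (A x) = x} ∈ nhds v := hleft
  have hU3 : A ⁻¹' (Metric.ball (A v) r') ∩ {x | B (A x) = x} ∈ nhds v :=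
    Filter.inter_mem hApre hleft_mem
  have hU3prop : ∀ x ∈ A ⁻¹' (Metric.ball (A v) r') ∩ {x | B (A x) = x},
      Vderiv V lam x = g (lam x) := by
    rintro x ⟨hx1, hx2⟩
    have := claimC (A x) hx1
    rwa [hx2, hLA] at this
  have part3 : ∃ U ∈ nhds v, ∃ g : ℝ → ℝ, ∀ x ∈ U, Vderiv V lam x = g (lam x) :=
    ⟨_, hU3, g, hU3prop⟩
  -- part (ii): FTC
  obtain ⟨ρ, hρ0, hρr, hρK⟩ := hr'ex ‖e‖ (norm_nonneg _)
  have hqball : ∀ s ∈ Set.Ioo (lam v - ρ) (lam v + ρ), q s ∈ Metric.ball (A v) r := by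
    intro s hs
    rw [Metric.mem_ball, dist_eq_norm, hqnorm]
    have habs : |s - lam v| < ρ := by
      rw [abs_lt]; constructor <;> [linarith [hs.1]; linarith [hs.2]]
    calc |s - lam v| * ‖e‖ ≤ ρ * ‖e‖ := mul_le_mul_of_nonneg_right habs.le (norm_nonneg _)
      _ = ‖e‖ * ρ := by ring
      _ < r := hρK
  have hqcont : Continuous q := by
    rw [hqdef]
    exact continuous_const.add ((continuous_id.sub continuous_const).smul continuous_const)
  have hgcont : ∀ s ∈ Set.Ioo (lam v - ρ) (lam v + ρ), ContinuousAt g s := by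
    intro s hs
    have h2 := hqball s hs
    have hBct : ContinuousAt B (q s) := (hBdiff _ (hball _ h2).2.2).continuousAt
    exact hVl.continuous.continuousAt.comp (hBct.comp hqcont.continuousAt)
  have hgOn : ContinuousOn g (Set.Ioo (lam v - ρ) (lam v + ρ)) :=
    fun s hs => (hgcont s hs).continuousWithinAt
  set G : ℝ → ℝ := fun s => ∫ t in (lam v)..s, g t with hGdef
  have hlamv_mem : lam v ∈ Set.Ioo (lam v - ρ) (lam v + ρ) := by
    constructor <;> linarith
  have hG : ∀ s ∈ Set.Ioo (lam v - ρ) (lam v + ρ), HasDerivAt G (g s) s := by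
    intro s hs
    have hsub : Set.uIcc (lam v) s ⊆ Set.Ioo (lam v - ρ) (lam v + ρ) :=
      (Set.ordConnected_Ioo).uIcc_subset hlamv_mem hs
    have hint : IntervalIntegrable g MeasureTheory.volume (lam v) s :=
      (hgOn.mono hsub).intervalIntegrable
    exact intervalIntegral.integral_hasDerivAt_right hint
      (ContinuousOn.stronglyMeasurableAtFilter isOpen_Ioo hgOn s hs) (hgcont s hs)
  have hlamc : ContinuousAt lam v := hlam1.continuous.continuousAt
  have hlam_pre : lam ⁻¹' (Set.Ioo (lam v - ρ) (lam v + ρ)) ∈ nhds v :=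
    hlamc.preimage_mem_nhds (Ioo_mem_nhds (by linarith) (by linarith))
  have part2 : ∃ U ∈ nhds v, ∃ μ : (Fin n → ℝ) → ℝ, ∀ x ∈ U,
      fderiv ℝ μ x = Vderiv V lam x • fderiv ℝ lam x := by
    refine ⟨(A ⁻¹' (Metric.ball (A v) r') ∩ {x | B (A x) = x}) ∩
      lam ⁻¹' (Set.Ioo (lam v - ρ) (lam v + ρ)),
      Filter.inter_mem hU3 hlam_pre, G ∘ lam, ?_⟩
    rintro x ⟨hxU, hx3⟩
    have hGd : HasDerivAt G (g (lam x)) (lam x) := hG _ hx3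
    have hlamd : HasFDerivAt lam (fderiv ℝ lam x) x :=
      (hlam1.differentiable one_ne_zero x).hasFDerivAt
    have hcomp : HasFDerivAt (G ∘ lam) ((g (lam x)) • fderiv ℝ lam x) x :=
      hGd.comp_hasFDerivAt x hlamd
    rw [hcomp.fderiv, ← hU3prop x hxU]
  exact ⟨part1, part2, part3⟩
end
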